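/- arXiv:2202.08050 — 4 statements merged into one kernel-verified Lean document; each statement's English description precedes it below -/
import Mathlib

section
/- Let k be a perfect field of characteristic p, (Q,Φ,Ψ) a Hasse–Witt triple, R_1 = Ker(Φ), and R_0 ⊆ Q a complement of R_1. Define M = Q ⊕ Q^∨ with the alternating form b((q,λ),(q',λ')) = λ'(q) − λ(q'), and define F(r_0 + r_1, λ) = (Φ(r_0), Ψ(r_1)) and V(q,λ) = (0, Φ^∨(λ mod Im(Φ)^⊥), −Ψ^∨(q mod Im(Φ))) ∈ Q ⊕ R_0^∨ ⊕ R_1^∨. Then Im(F) = Ker(V) and Ker(F) = Im(V), so (M,F,V,b) is a polarized Dieudonné module. -/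
/-!
`F` vanishes exactly on `0 ⊕ Q^∨`, because `Φ` is injective on `R₀` and `Ψ` is injective.
`V` maps onto `0 ⊕ Q^∨`: its values on `R₀` and `R₁` can be prescribed at will by extending
functionals along the injections `Φ|R₀ : R₀ → Q` and `Ψ : R₁ → Q^∨`, using `Q ≅ Q^∨∨`.
Dually, `V (q, λ) = 0` says that `λ` kills `Im Φ` and `q` is killed by `Im Ψ = Im(Φ)^⊥`,
i.e. `λ ∈ Im Ψ` and `q ∈ Im Φ`; this is exactly the image of `F`.
-/

open Module LinearMap

theorem Module.Dual.exists_apply_semilinear_eq {k R M : Type*} [Field k] [AddCommGroup R]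
    [Module k R] [AddCommGroup M] [Module k M] (σ : k ≃+* k) {f : R →ₛₗ[(σ : k →+* k)] M}
    (hf : Function.Injective f) (l : Dual k R) : ∃ μ : Dual k M, ∀ r, μ (f r) = σ (l r) := by
  have := RingHomInvPair.of_ringEquiv σ
  have : RingHomInvPair (σ.symm : k →+* k) σ := RingHomInvPair.of_ringEquiv σ.symm
  let e := LinearEquiv.ofInjective f hf
  let g : range f →ₗ[k] k :=
    { toFun := fun w => σ (l (e.symm w))
      map_add' := fun v w => by simp only [map_add]
      map_smul' := fun c w => by simp only [map_smulₛₗ, smul_eq_mul, map_mul]; simp }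
  obtain ⟨μ, hμ⟩ := LinearMap.exists_extend g
  refine ⟨μ, fun r => ?_⟩
  have hr : e.symm ⟨f r, r, rfl⟩ = r := e.symm_apply_eq.mpr rfl
  simpa [g, hr] using LinearMap.congr_fun hμ ⟨f r, r, rfl⟩

theorem Module.Dual.prod_eq_zero_of_forall_apply_sub_apply_eq_zero {k M : Type*} [Field k]
    [AddCommGroup M] [Module k M] {x : M × Dual k M}
    (h : ∀ y : M × Dual k M, y.2 x.1 - x.2 y.1 = 0) : x = 0 := by
  refine Prod.ext ((forall_dual_apply_eq_zero_iff k x.1).mp fun φ => ?_) (LinearMap.ext fun v => ?_)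
  · simpa using h (0, φ)
  · simpa using h (v, 0)

namespace HasseWitt

variable {k Q : Type*} [Field k] [AddCommGroup Q] [Module k Q] {σ : k ≃+* k}
  {Φ : Q →ₛₗ[(σ : k →+* k)] Q} {Ψ : ker Φ →ₛₗ[(σ : k →+* k)] Dual k Q} {R₀ : Submodule k Q}
  {F : (Q × Dual k Q) →ₛₗ[(σ : k →+* k)] (Q × Dual k Q)}
  {V : (Q × Dual k Q) →ₛₗ[(σ.symm : k →+* k)] (Q × Dual k Q)}

theorem F_apply_of_add_eq
    (hF : ∀ (r₀ : R₀) (r₁ : ker Φ) (lam : Dual k Q), F ((r₀ : Q) + r₁, lam) = (Φ r₀, Ψ r₁))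
    {x : Q × Dual k Q} {r₀ r₁ : Q} (hr₀ : r₀ ∈ R₀) (hr₁ : r₁ ∈ ker Φ)
    (h : r₀ + r₁ = x.1) : F x = (Φ r₀, Ψ ⟨r₁, hr₁⟩) := by
  rw [← hF ⟨r₀, hr₀⟩ ⟨r₁, hr₁⟩ x.2]
  simp only [h]

theorem ker_F (hR₀ : IsCompl R₀ (ker Φ)) (hΨinj : Function.Injective Ψ)
    (hF : ∀ (r₀ : R₀) (r₁ : ker Φ) (lam : Dual k Q), F ((r₀ : Q) + r₁, lam) = (Φ r₀, Ψ r₁)) :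
    ker F = (⊥ : Submodule k Q).prod ⊤ := by
  ext x
  obtain ⟨r₀, r₁, hr₀, hr₁, hx⟩ := Submodule.codisjoint_iff_exists_add_eq.mp hR₀.codisjoint x.1
  simp only [mem_ker, Submodule.mem_prod, Submodule.mem_bot, Submodule.mem_top, and_true,
    F_apply_of_add_eq hF hr₀ hr₁ hx, Prod.mk_eq_zero, ← hx]
  constructor
  · rintro ⟨hΦ, hΨ⟩
    have hr₁0 : (⟨r₁, hr₁⟩ : ker Φ) = 0 := hΨinj (hΨ.trans (map_zero Ψ).symm)
    rw [Submodule.disjoint_def.mp hR₀.disjoint r₀ hr₀ hΦ, (Submodule.mk_eq_zero _ _).mp hr₁0,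
      add_zero]
  · intro h
    obtain ⟨rfl, rfl⟩ := Submodule.disjoint_iff_add_eq_zero.mp hR₀.disjoint hr₀ hr₁ h
    exact ⟨map_zero Φ, map_zero Ψ⟩

theorem range_F (hR₀ : IsCompl R₀ (ker Φ))
    (hF : ∀ (r₀ : R₀) (r₁ : ker Φ) (lam : Dual k Q), F ((r₀ : Q) + r₁, lam) = (Φ r₀, Ψ r₁)) :
    range F = (range Φ).prod (range Ψ) := by
  ext y
  rw [Submodule.mem_prod]
  constructor
  · rintro ⟨x, rfl⟩
    obtain ⟨r₀, r₁, hr₀, hr₁, hx⟩ := Submodule.codisjoint_iff_exists_add_eq.mp hR₀.codisjoint x.1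
    rw [F_apply_of_add_eq hF hr₀ hr₁ hx]
    exact ⟨⟨r₀, rfl⟩, ⟨_, rfl⟩⟩
  · rintro ⟨hy₁, r₁, hr₁⟩
    rw [← Submodule.map_eq_range_iff.mpr hR₀.codisjoint] at hy₁
    obtain ⟨r₀, hr₀, hΦ⟩ := hy₁
    exact ⟨((r₀ : Q) + r₁, 0), by rw [hF ⟨r₀, hr₀⟩ r₁, hΦ, hr₁]⟩

theorem V_snd_eq_zero_iff (hR₀ : IsCompl R₀ (ker Φ))
    (hV₂ : ∀ (x : Q × Dual k Q) (r₀ : R₀), (V x).2 r₀ = σ.symm (x.2 (Φ r₀)))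
    (hV₃ : ∀ (x : Q × Dual k Q) (r₁ : ker Φ), (V x).2 r₁ = σ.symm (-(Ψ r₁) x.1))
    (y : Q × Dual k Q) :
    (V y).2 = 0 ↔ (∀ r₀ ∈ R₀, y.2 (Φ r₀) = 0) ∧ ∀ r₁ : ker Φ, Ψ r₁ y.1 = 0 := by
  constructor
  · intro h
    refine ⟨fun r₀ hr₀ => ?_, fun r₁ => ?_⟩
    · simpa [h] using (hV₂ y ⟨r₀, hr₀⟩).symm
    · simpa [h] using (hV₃ y r₁).symm
  · rintro ⟨h₀, h₁⟩
    refine ext_on_codisjoint hR₀.codisjoint (fun r₀ hr₀ => ?_) (fun r₁ hr₁ => ?_)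
    · simpa [h₀ r₀ hr₀] using hV₂ y ⟨r₀, hr₀⟩
    · simpa [h₁ ⟨r₁, hr₁⟩] using hV₃ y ⟨r₁, hr₁⟩

theorem ker_V (hR₀ : IsCompl R₀ (ker Φ))
    (hΨrange : range Ψ = (range Φ).dualAnnihilator)
    (hV₁ : ∀ x : Q × Dual k Q, (V x).1 = 0)
    (hV₂ : ∀ (x : Q × Dual k Q) (r₀ : R₀), (V x).2 r₀ = σ.symm (x.2 (Φ r₀)))
    (hV₃ : ∀ (x : Q × Dual k Q) (r₁ : ker Φ), (V x).2 r₁ = σ.symm (-(Ψ r₁) x.1)) :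
    ker V = (range Φ).prod (range Ψ) := by
  ext y
  have h₁ : y.1 ∈ range Φ ↔ ∀ r₁ : ker Φ, Ψ r₁ y.1 = 0 := by
    rw [← Subspace.dualAnnihilator_dualCoannihilator_eq (W := range Φ), ← hΨrange,
      Submodule.mem_dualCoannihilator]
    exact ⟨fun h r₁ => h _ ⟨r₁, rfl⟩, fun h _ ⟨r₁, hr₁⟩ => hr₁ ▸ h r₁⟩
  have h₂ : y.2 ∈ range Ψ ↔ ∀ r₀ ∈ R₀, y.2 (Φ r₀) = 0 := by
    rw [hΨrange, Submodule.mem_dualAnnihilator, ← Submodule.map_eq_range_iff.mpr hR₀.codisjoint]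
    simp
  rw [mem_ker, Prod.ext_iff, hV₁, Prod.snd_zero, V_snd_eq_zero_iff hR₀ hV₂ hV₃, Submodule.mem_prod,
    h₁, h₂]
  simp [and_comm]

theorem range_V [FiniteDimensional k Q] (hR₀ : IsCompl R₀ (ker Φ))
    (hΨinj : Function.Injective Ψ) (hV₁ : ∀ x : Q × Dual k Q, (V x).1 = 0)
    (hV₂ : ∀ (x : Q × Dual k Q) (r₀ : R₀), (V x).2 r₀ = σ.symm (x.2 (Φ r₀)))
    (hV₃ : ∀ (x : Q × Dual k Q) (r₁ : ker Φ), (V x).2 r₁ = σ.symm (-(Ψ r₁) x.1)) :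
    range V = (⊥ : Submodule k Q).prod ⊤ := by
  refine le_antisymm (fun _ ⟨x, hx⟩ => ⟨hx ▸ hV₁ x, trivial⟩) fun ⟨q, l⟩ ⟨hq, _⟩ => ?_
  obtain ⟨μ, hμ⟩ := Dual.exists_apply_semilinear_eq σ
    (injective_domRestrict_iff.mpr hR₀.disjoint) (l.domRestrict R₀)
  obtain ⟨G, hG⟩ := Dual.exists_apply_semilinear_eq σ hΨinj (-l.domRestrict (ker Φ))
  refine ⟨((evalEquiv k Q).symm G, μ), Prod.ext ((hV₁ _).trans hq.symm) ?_⟩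
  refine ext_on_codisjoint hR₀.codisjoint (fun r₀ hr₀ => ?_) (fun r₁ hr₁ => ?_)
  · rw [hV₂ _ ⟨r₀, hr₀⟩]
    simpa using congrArg σ.symm (hμ ⟨r₀, hr₀⟩)
  · rw [hV₃ _ ⟨r₁, hr₁⟩]
    simpa [neg_eq_iff_eq_neg] using congrArg σ.symm (hG ⟨r₁, hr₁⟩)

theorem F_V_adjoint (hR₀ : IsCompl R₀ (ker Φ))
    (hF : ∀ (r₀ : R₀) (r₁ : ker Φ) (lam : Dual k Q), F ((r₀ : Q) + r₁, lam) = (Φ r₀, Ψ r₁))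
    (hV₂ : ∀ (x : Q × Dual k Q) (r₀ : R₀), (V x).2 r₀ = σ.symm (x.2 (Φ r₀)))
    (hV₃ : ∀ (x : Q × Dual k Q) (r₁ : ker Φ), (V x).2 r₁ = σ.symm (-(Ψ r₁) x.1))
    (x y : Q × Dual k Q) : σ ((V y).2 x.1) = y.2 (F x).1 - (F x).2 y.1 := by
  obtain ⟨r₀, r₁, hr₀, hr₁, hx⟩ := Submodule.codisjoint_iff_exists_add_eq.mp hR₀.codisjoint x.1
  rw [F_apply_of_add_eq hF hr₀ hr₁ hx, ← hx, map_add, hV₂ y ⟨r₀, hr₀⟩, hV₃ y ⟨r₁, hr₁⟩, map_add,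
    σ.apply_symm_apply, σ.apply_symm_apply]
  exact (sub_eq_add_neg _ _).symm

end HasseWitt

theorem stmt8_general (p : ℕ) (k : Type*) [Field k]
    (σ : k ≃+* k) (hσ : ∀ x : k, σ x = x ^ p)
    (Q : Type*) [AddCommGroup Q] [Module k Q] [FiniteDimensional k Q]
    (Φ : Q →ₛₗ[(σ : k →+* k)] Q)
    (Ψ : ↥(LinearMap.ker Φ) →ₛₗ[(σ : k →+* k)] Module.Dual k Q)
    (hΨinj : Function.Injective Ψ)
    (hΨrange : LinearMap.range Ψ = (LinearMap.range Φ).dualAnnihilator)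
    (R₀ : Submodule k Q) (hR₀ : IsCompl R₀ (LinearMap.ker Φ))
    (b : (Q × Module.Dual k Q) →ₗ[k] (Q × Module.Dual k Q) →ₗ[k] k)
    (hb : ∀ x y : Q × Module.Dual k Q, b x y = y.2 x.1 - x.2 y.1)
    (F : (Q × Module.Dual k Q) →ₛₗ[(σ : k →+* k)] (Q × Module.Dual k Q))
    (hF : ∀ (r₀ : ↥R₀) (r₁ : ↥(LinearMap.ker Φ)) (lam : Module.Dual k Q),
      F ((r₀ : Q) + (r₁ : Q), lam) = (Φ (r₀ : Q), Ψ r₁))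
    (V : (Q × Module.Dual k Q) →ₛₗ[(σ.symm : k →+* k)] (Q × Module.Dual k Q))
    (hV1 : ∀ x : Q × Module.Dual k Q, (V x).1 = 0)
    (hV2 : ∀ (x : Q × Module.Dual k Q) (r₀ : ↥R₀),
      (V x).2 (r₀ : Q) = σ.symm (x.2 (Φ (r₀ : Q))))
    (hV3 : ∀ (x : Q × Module.Dual k Q) (r₁ : ↥(LinearMap.ker Φ)),
      (V x).2 (r₁ : Q) = σ.symm (-(Ψ r₁) x.1)) :
    LinearMap.range F = LinearMap.ker V ∧
    LinearMap.ker F = LinearMap.range V ∧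
    (∀ x, b x x = 0) ∧
    (∀ x, (∀ y, b x y = 0) → x = 0) ∧
    (∀ x y, b (F x) y = (b x (V y)) ^ p) := by
  refine ⟨?_, ?_, fun x => by rw [hb, sub_self], fun x hx => ?_, fun x y => ?_⟩
  · rw [HasseWitt.range_F hR₀ hF, HasseWitt.ker_V hR₀ hΨrange hV1 hV2 hV3]
  · rw [HasseWitt.ker_F hR₀ hΨinj hF, HasseWitt.range_V hR₀ hΨinj hV1 hV2 hV3]
  · exact Dual.prod_eq_zero_of_forall_apply_sub_apply_eq_zero fun y => (hb x y).symm.trans (hx y)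
  · rw [hb, hb, hV1, map_zero, sub_zero, ← hσ, HasseWitt.F_V_adjoint hR₀ hF hV2 hV3]

/-- From a Hasse–Witt triple `(Q,Φ,Ψ)` over a perfect field `k` of characteristic `p`,
with `R₁ = ker Φ` and a complement `R₀`, the maps `F` and `V` defined on
`M = Q ⊕ Q^∨` by `F(r₀+r₁,λ) = (Φ r₀, Ψ r₁)` and
`V(q,λ) = (0, Φ^∨(λ mod im(Φ)^⊥), −Ψ^∨(q mod im Φ))` (the latter expressed by its
values on `R₀` and `R₁`), together with the form `b((q,λ),(q',λ')) = λ'(q) − λ(q')`,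
satisfy `im F = ker V` and `ker F = im V`, so `(M,F,V,b)` is a polarized Dieudonné
module. -/
theorem stmt8 (p : ℕ) [Fact p.Prime] (k : Type*) [Field k] [CharP k p]
    (σ : k ≃+* k) (hσ : ∀ x : k, σ x = x ^ p)
    (Q : Type*) [AddCommGroup Q] [Module k Q] [FiniteDimensional k Q]
    (Φ : Q →ₛₗ[(σ : k →+* k)] Q)
    (Ψ : ↥(LinearMap.ker Φ) →ₛₗ[(σ : k →+* k)] Module.Dual k Q)
    (hΨinj : Function.Injective Ψ)
    (hΨrange : LinearMap.range Ψ = (LinearMap.range Φ).dualAnnihilator)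
    (R₀ : Submodule k Q) (hR₀ : IsCompl R₀ (LinearMap.ker Φ))
    (b : (Q × Module.Dual k Q) →ₗ[k] (Q × Module.Dual k Q) →ₗ[k] k)
    (hb : ∀ x y : Q × Module.Dual k Q, b x y = y.2 x.1 - x.2 y.1)
    (F : (Q × Module.Dual k Q) →ₛₗ[(σ : k →+* k)] (Q × Module.Dual k Q))
    (hF : ∀ (r₀ : ↥R₀) (r₁ : ↥(LinearMap.ker Φ)) (lam : Module.Dual k Q),
      F ((r₀ : Q) + (r₁ : Q), lam) = (Φ (r₀ : Q), Ψ r₁))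
    (V : (Q × Module.Dual k Q) →ₛₗ[(σ.symm : k →+* k)] (Q × Module.Dual k Q))
    (hV1 : ∀ x : Q × Module.Dual k Q, (V x).1 = 0)
    (hV2 : ∀ (x : Q × Module.Dual k Q) (r₀ : ↥R₀),
      (V x).2 (r₀ : Q) = σ.symm (x.2 (Φ (r₀ : Q))))
    (hV3 : ∀ (x : Q × Module.Dual k Q) (r₁ : ↥(LinearMap.ker Φ)),
      (V x).2 (r₁ : Q) = σ.symm (-(Ψ r₁) x.1)) :
    LinearMap.range F = LinearMap.ker V ∧
    LinearMap.ker F = LinearMap.range V ∧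
    (∀ x, b x x = 0) ∧
    (∀ x, (∀ y, b x y = 0) → x = 0) ∧
    (∀ x y, b (F x) y = (b x (V y)) ^ p) :=
  stmt8_general p k σ hσ Q Φ Ψ hΨinj hΨrange R₀ hR₀ b hb F hF V hV1 hV2 hV3
end

section
/- Let k be a perfect field of characteristic p, (Q,Φ,Ψ) a Hasse–Witt triple, and R_1 = Ker(Φ). If R_0 and R_0' are two complements of R_1 in Q, then the polarized Dieudonné modules (M,F,V,b) and (M,F',V',b) on M = Q ⊕ Q^∨ constructed from (Q,Φ,Ψ) using R_0 and R_0' respectively are isomorphic: there exists a k-linear bijection α : M → M preserving b with α ∘ F = F' ∘ α. -/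
/-!
The projections `π, π' : Q → ker Φ` along `R₀` and `R₀'` agree on `ker Φ`, so
`d := Ψ ∘ (π' - π)` is a `σ`-semilinear map killing `ker Φ`; its values lie in
`range Ψ = (range Φ)^⊥`. Hence `d = g ∘ Φ` for a `k`-linear `g : Q → (range Φ)^⊥`, and
`u := g + gᵀ` is a symmetric map with `u ∘ Φ = d`, because `g y` kills `range Φ`.
The shear `(q, λ) ↦ (q, λ + u q)` preserves `b` since `u` is symmetric, and it turns the
second component `Ψ (π q)` of `F` into `Ψ (π q) + d q = Ψ (π' q)`, that of `F'`.
-/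

open LinearMap Submodule

theorem LinearMap.exists_comp_eq_of_ker_le {K L V W N : Type*} [Ring K] [DivisionRing L]
    [AddCommGroup V] [Module K V] [AddCommGroup W] [Module L W] [AddCommGroup N] [Module L N]
    {σ : K →+* L} {σ' : L →+* K} [RingHomInvPair σ σ'] [RingHomInvPair σ' σ]
    (Φ : V →ₛₗ[σ] W) (d : V →ₛₗ[σ] N) (h : ker Φ ≤ ker d) :
    ∃ f : W →ₗ[L] N, ∀ v, f (Φ v) = d v := by
  let e := LinearEquiv.ofInjective ((ker Φ).liftQ Φ le_rfl)
    (ker_eq_bot.mp (ker_liftQ_eq_bot _ _ _ le_rfl))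
  obtain ⟨f, hf⟩ := exists_extend (((ker Φ).liftQ d h).comp e.symm.toLinearMap)
  refine ⟨f, fun v => ?_⟩
  simpa [e] using congr($hf (e ((ker Φ).mkQ v)))

theorem exists_symm_comp_eq_of_ker_le_of_range_le {K V : Type*} [Field K] [AddCommGroup V]
    [Module K V] {σ σ' : K →+* K} [RingHomInvPair σ σ'] [RingHomInvPair σ' σ] (Φ : V →ₛₗ[σ] V)
    (d : V →ₛₗ[σ] Module.Dual K V) (hker : ker Φ ≤ ker d)
    (hrange : range d ≤ (range Φ).dualAnnihilator) :
    ∃ u : V →ₗ[K] Module.Dual K V, (∀ x y, u x y = u y x) ∧ ∀ q, u (Φ q) = d q := by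
  let S : Submodule K (Module.Dual K V) := (range Φ).dualAnnihilator
  let d' : V →ₛₗ[σ] S := d.codRestrict S fun q => hrange (mem_range_self d q)
  have hker' : ker Φ ≤ ker d' := fun x hx => by
    simpa [d', Subtype.ext_iff] using hker hx
  have hfactor := exists_comp_eq_of_ker_le (N := S) Φ d' hker'
  obtain ⟨f, hf⟩ := hfactor
  let g := S.subtype ∘ₗ f
  have hg : ∀ x q, g x (Φ q) = 0 := fun x q =>
    (mem_dualAnnihilator _).mp (f x).2 _ (mem_range_self Φ q)
  have hgΦ : ∀ q, g (Φ q) = d q := fun q => by simp [g, hf, d']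
  refine ⟨g + g.flip, fun x y => add_comm _ _, fun q => LinearMap.ext fun y => ?_⟩
  rw [LinearMap.add_apply, LinearMap.add_apply, flip_apply, hgΦ, hg, add_zero]

section Shear

variable {K V : Type*} [CommRing K] [AddCommGroup V] [Module K V]

def shear (u : V →ₗ[K] Module.Dual K V) : (V × Module.Dual K V) ≃ₗ[K] (V × Module.Dual K V) :=
  (LinearEquiv.refl K V).skewProd (LinearEquiv.refl K _) u

theorem shear_apply (u : V →ₗ[K] Module.Dual K V) (x : V × Module.Dual K V) :
    shear u x = (x.1, x.2 + u x.1) :=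
  rfl

theorem shear_pairing {u : V →ₗ[K] Module.Dual K V} (hu : ∀ x y, u x y = u y x)
    (x y : V × Module.Dual K V) :
    (shear u y).2 (shear u x).1 - (shear u x).2 (shear u y).1 = y.2 x.1 - x.2 y.1 := by
  simp only [shear_apply, LinearMap.add_apply, hu y.1 x.1]
  ring

end Shear

theorem apply_eq_of_isCompl_ker {K L V W D M : Type*} [Ring K] [Ring L] [AddCommGroup V]
    [Module K V] [AddCommGroup W] [Module L W] {σ : K →+* L} (Φ : V →ₛₗ[σ] W) (Ψ : ker Φ → M)
    {R₀ : Submodule K V} (hR₀ : IsCompl R₀ (ker Φ)) (F : V × D → W × M)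
    (hF : ∀ (r₀ : R₀) (r₁ : ker Φ) (lam : D), F ((r₀ : V) + (r₁ : V), lam) = (Φ r₀, Ψ r₁))
    (x : V × D) : F x = (Φ x.1, Ψ ((ker Φ).projectionOnto R₀ hR₀.symm x.1)) := by
  have hsplit := projection_add_projection_eq_self hR₀ x.1
  have hF_x := hF (R₀.projectionOnto _ hR₀ x.1) ((ker Φ).projectionOnto R₀ hR₀.symm x.1) x.2
  have hΦ : Φ (R₀.projection _ hR₀ x.1) = Φ x.1 := by
    conv_rhs => rw [← hsplit]
    rw [map_add, mem_ker.mp (projection_apply_mem hR₀.symm x.1), add_zero]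
  simp only [coe_projectionOnto_apply, hsplit] at hF_x
  rw [hF_x, hΦ]

theorem Submodule.le_ker_projectionOnto_sub_projectionOnto {K V : Type*} [Ring K]
    [AddCommGroup V] [Module K V] {P R R' : Submodule K V} (h : IsCompl P R) (h' : IsCompl P R') :
    P ≤ ker (P.projectionOnto R' h' - P.projectionOnto R h) := fun x hx => by
  simp [projectionOnto_apply_of_mem_left _ hx]

theorem stmt9_general (k : Type*) [Field k]
    (σ : k ≃+* k)
    (Q : Type*) [AddCommGroup Q] [Module k Q]
    (Φ : Q →ₛₗ[(σ : k →+* k)] Q)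
    (Ψ : ↥(LinearMap.ker Φ) →ₛₗ[(σ : k →+* k)] Module.Dual k Q)
    (hΨrange : LinearMap.range Ψ = (LinearMap.range Φ).dualAnnihilator)
    (R₀ R₀' : Submodule k Q)
    (hR₀ : IsCompl R₀ (LinearMap.ker Φ)) (hR₀' : IsCompl R₀' (LinearMap.ker Φ))
    (b : (Q × Module.Dual k Q) →ₗ[k] (Q × Module.Dual k Q) →ₗ[k] k)
    (hb : ∀ x y : Q × Module.Dual k Q, b x y = y.2 x.1 - x.2 y.1)
    (F F' : (Q × Module.Dual k Q) →ₛₗ[(σ : k →+* k)] (Q × Module.Dual k Q))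
    (hF : ∀ (r₀ : ↥R₀) (r₁ : ↥(LinearMap.ker Φ)) (lam : Module.Dual k Q),
      F ((r₀ : Q) + (r₁ : Q), lam) = (Φ (r₀ : Q), Ψ r₁))
    (hF' : ∀ (r₀ : ↥R₀') (r₁ : ↥(LinearMap.ker Φ)) (lam : Module.Dual k Q),
      F' ((r₀ : Q) + (r₁ : Q), lam) = (Φ (r₀ : Q), Ψ r₁)) :
    ∃ α : (Q × Module.Dual k Q) ≃ₗ[k] (Q × Module.Dual k Q),
      (∀ x y, b (α x) (α y) = b x y) ∧ (∀ x, α (F x) = F' (α x)) := by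
  have := RingHomInvPair.of_ringEquiv σ
  have := RingHomInvPair.of_ringEquiv_symm σ
  set π := (ker Φ).projectionOnto R₀ hR₀.symm
  set π' := (ker Φ).projectionOnto R₀' hR₀'.symm
  obtain ⟨u, hu_symm, hu⟩ := exists_symm_comp_eq_of_ker_le_of_range_le Φ (Ψ ∘ₛₗ (π' - π))
    ((le_ker_projectionOnto_sub_projectionOnto hR₀.symm hR₀'.symm).trans (ker_le_ker_comp _ _))
    (hΨrange ▸ range_comp_le_range _ _)
  refine ⟨shear u, fun x y => by rw [hb, hb, shear_pairing hu_symm], fun x => ?_⟩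
  rw [apply_eq_of_isCompl_ker Φ Ψ hR₀ F hF, apply_eq_of_isCompl_ker Φ Ψ hR₀' F' hF',
    shear_apply, shear_apply, hu]
  simp [π, π']

/-- Independence of the choice of complement: if `R₀` and `R₀'` are two complements of
`R₁ = ker Φ` in `Q`, then the polarized Dieudonné modules `(M,F,V,b)` and `(M,F',V',b)`
on `M = Q ⊕ Q^∨` constructed from the Hasse–Witt triple `(Q,Φ,Ψ)` using `R₀`
resp. `R₀'` are isomorphic: there is a `k`-linear bijection `α : M → M` preserving `b`
with `α ∘ F = F' ∘ α`. -/
theorem stmt9 (p : ℕ) [Fact p.Prime] (k : Type*) [Field k] [CharP k p]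
    (σ : k ≃+* k) (hσ : ∀ x : k, σ x = x ^ p)
    (Q : Type*) [AddCommGroup Q] [Module k Q] [FiniteDimensional k Q]
    (Φ : Q →ₛₗ[(σ : k →+* k)] Q)
    (Ψ : ↥(LinearMap.ker Φ) →ₛₗ[(σ : k →+* k)] Module.Dual k Q)
    (hΨinj : Function.Injective Ψ)
    (hΨrange : LinearMap.range Ψ = (LinearMap.range Φ).dualAnnihilator)
    (R₀ R₀' : Submodule k Q)
    (hR₀ : IsCompl R₀ (LinearMap.ker Φ)) (hR₀' : IsCompl R₀' (LinearMap.ker Φ))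
    (b : (Q × Module.Dual k Q) →ₗ[k] (Q × Module.Dual k Q) →ₗ[k] k)
    (hb : ∀ x y : Q × Module.Dual k Q, b x y = y.2 x.1 - x.2 y.1)
    (F F' : (Q × Module.Dual k Q) →ₛₗ[(σ : k →+* k)] (Q × Module.Dual k Q))
    (hF : ∀ (r₀ : ↥R₀) (r₁ : ↥(LinearMap.ker Φ)) (lam : Module.Dual k Q),
      F ((r₀ : Q) + (r₁ : Q), lam) = (Φ (r₀ : Q), Ψ r₁))
    (hF' : ∀ (r₀ : ↥R₀') (r₁ : ↥(LinearMap.ker Φ)) (lam : Module.Dual k Q),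
      F' ((r₀ : Q) + (r₁ : Q), lam) = (Φ (r₀ : Q), Ψ r₁)) :
    ∃ α : (Q × Module.Dual k Q) ≃ₗ[k] (Q × Module.Dual k Q),
      (∀ x y, b (α x) (α y) = b x y) ∧ (∀ x, α (F x) = F' (α x)) :=
  stmt9_general k σ Q Φ Ψ hΨrange R₀ R₀' hR₀ hR₀' b hb F F' hF hF'
end

section
/- Let (M,F,V,b) be a polarized Dieudonné module over a perfect field k. Set Q = M/Ker(F), let Φ : Q → Q be induced by F, and for x ∈ M with F(x) ∈ Ker(F) define Ψ(x mod Ker F) = b(−, F(x)) ∈ M^∨. Then b(−,F(x)) vanishes on Ker(F), hence defines an element of Q^∨; moreover Ψ takes values in Im(Φ)^⊥ and Ψ : Ker(Φ) → Im(Φ)^⊥ is a σ-semilinear bijection. Thus (Q,Φ,Ψ) is a Hasse–Witt triple. -/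
/-! Everything follows from the adjunction `b (F x) y = b x (V y) ^ p`: since a `p`-th power
vanishes exactly at `0`, it makes `ker F` orthogonal to `range V` and `range F` orthogonal to
`ker V`. Combined with `ker F = range V` and `ker V = range F`, a functional `b (-, w)` kills
`ker F` iff `F w = 0`, and kills `im F` iff `V w = 0`, i.e. `w ∈ im F`. Surjectivity of `Ψ`
then comes from the fact that a nondegenerate form identifies `M` with its dual. -/

section Polarization

variable {k M : Type*} [Field k] [AddCommGroup M] [Module k M] {σ τ : k →+* k} {p : ℕ}
  {F : M →ₛₗ[σ] M} {V : M →ₛₗ[τ] M} {b : M →ₗ[k] M →ₗ[k] k}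

theorem apply_map_eq_zero_of_map_eq_zero (hpol : ∀ x y, b (F x) y = b x (V y) ^ p)
    {y : M} (hy : F y = 0) (u : M) : b y (V u) = 0 :=
  eq_zero_of_pow_eq_zero (n := p) (by rw [← hpol, hy, map_zero, LinearMap.zero_apply])

theorem map_apply_eq_zero_of_map_eq_zero (hp : p ≠ 0)
    (hpol : ∀ x y, b (F x) y = b x (V y) ^ p) {z : M} (hz : V z = 0) (x : M) : b (F x) z = 0 := by
  rw [hpol, hz, map_zero, zero_pow hp]

theorem map_eq_zero_of_forall_apply_map_eq_zero (hp : p ≠ 0)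
    (hpol : ∀ x y, b (F x) y = b x (V y) ^ p) (hrefl : b.IsRefl) (hb : b.SeparatingLeft)
    {w : M} (hw : ∀ u, b (V u) w = 0) : F w = 0 :=
  hb _ fun u => by rw [hpol, hrefl _ _ (hw u), zero_pow hp]

theorem map_eq_zero_of_forall_map_apply_eq_zero (hpol : ∀ x y, b (F x) y = b x (V y) ^ p)
    (hb : b.SeparatingRight) {w : M} (hw : ∀ y, b (F y) w = 0) : V w = 0 :=
  hb _ fun y => eq_zero_of_pow_eq_zero (n := p) (by rw [← hpol, hw])

theorem exists_forall_eq_apply_right [FiniteDimensional k M] (hb : b.Nondegenerate)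
    (lam : Module.Dual k M) : ∃ w, ∀ y, lam y = b y w :=
  ⟨(LinearMap.BilinForm.toDual b.flip ⟨hb.2, hb.1⟩).symm lam, fun y =>
    (LinearMap.BilinForm.apply_toDual_symm_apply (B := b.flip) lam y).symm⟩

end Polarization

theorem stmt10_general (p : ℕ) [Fact p.Prime] (k : Type*) [Field k]
    (σ : k ≃+* k)
    (M : Type*) [AddCommGroup M] [Module k M] [FiniteDimensional k M]
    (F : M →ₛₗ[(σ : k →+* k)] M) (V : M →ₛₗ[(σ.symm : k →+* k)] M)
    (h1 : LinearMap.ker F = LinearMap.range V)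
    (h2 : LinearMap.ker V = LinearMap.range F)
    (b : M →ₗ[k] M →ₗ[k] k)
    (halt : ∀ x, b x x = 0)
    (hnd : ∀ x, (∀ y, b x y = 0) → x = 0)
    (hpol : ∀ x y, b (F x) y = (b x (V y)) ^ p) :
    (∀ x, F x ∈ LinearMap.ker F → ∀ y ∈ LinearMap.ker F, b y (F x) = 0) ∧
    (∀ x, F x ∈ LinearMap.ker F → ∀ y, b (F y) (F x) = 0) ∧
    (∀ x, F x ∈ LinearMap.ker F → (∀ y, b y (F x) = 0) → x ∈ LinearMap.ker F) ∧
    (∀ lam : Module.Dual k M, (∀ y ∈ LinearMap.ker F, lam y = 0) →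
      (∀ y, lam (F y) = 0) →
      ∃ x, F x ∈ LinearMap.ker F ∧ ∀ y, lam y = b y (F x)) := by
  have hp : p ≠ 0 := (Fact.out : p.Prime).ne_zero
  have hrefl : b.IsRefl := LinearMap.IsAlt.isRefl halt
  have hb : b.Nondegenerate := hrefl.nondegenerate_iff_separatingLeft.mpr hnd
  refine ⟨fun x hx y hy => ?_, fun x _ y => ?_, fun x _ hx => hb.2 _ hx, fun lam hker hran => ?_⟩
  · obtain ⟨u, hu⟩ : F x ∈ LinearMap.range V := h1 ▸ hx
    exact hu ▸ apply_map_eq_zero_of_map_eq_zero hpol hy u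
  · exact map_apply_eq_zero_of_map_eq_zero hp hpol (h2 ▸ ⟨x, rfl⟩ : F x ∈ LinearMap.ker V) y
  · obtain ⟨w, hw⟩ := exists_forall_eq_apply_right hb lam
    have hFw : F w = 0 := map_eq_zero_of_forall_apply_map_eq_zero hp hpol hrefl hb.1
      fun u => hw (V u) ▸ hker _ (h1 ▸ ⟨u, rfl⟩)
    have hVw : V w = 0 := map_eq_zero_of_forall_map_apply_eq_zero hpol hb.2
      fun y => hw (F y) ▸ hran y
    obtain ⟨x, rfl⟩ : w ∈ LinearMap.range F := h2 ▸ hVw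
    exact ⟨x, hFw, hw⟩

/-- From a polarized Dieudonné module `(M,F,V,b)` one obtains a Hasse–Witt triple on
`Q = M/ker F`: for `x` with `F x ∈ ker F` (i.e. `x mod ker F ∈ ker Φ`), the functional
`b(−,F x)` vanishes on `ker F` (hence lives on `Q`), vanishes on the image of `Φ`
(i.e. on all `F y`), the assignment `Ψ(x mod ker F) = b(−,F x)` is injective, and every
functional vanishing on `ker F` and on `im F` arises this way (surjectivity onto
`im(Φ)^⊥`). Thus `(Q,Φ,Ψ)` is a Hasse–Witt triple. -/
theorem stmt10 (p : ℕ) [Fact p.Prime] (k : Type*) [Field k] [CharP k p]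
    (σ : k ≃+* k) (hσ : ∀ x : k, σ x = x ^ p)
    (M : Type*) [AddCommGroup M] [Module k M] [FiniteDimensional k M]
    (F : M →ₛₗ[(σ : k →+* k)] M) (V : M →ₛₗ[(σ.symm : k →+* k)] M)
    (h1 : LinearMap.ker F = LinearMap.range V)
    (h2 : LinearMap.ker V = LinearMap.range F)
    (b : M →ₗ[k] M →ₗ[k] k)
    (halt : ∀ x, b x x = 0)
    (hnd : ∀ x, (∀ y, b x y = 0) → x = 0)
    (hpol : ∀ x y, b (F x) y = (b x (V y)) ^ p) :
    (∀ x, F x ∈ LinearMap.ker F → ∀ y ∈ LinearMap.ker F, b y (F x) = 0) ∧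
    (∀ x, F x ∈ LinearMap.ker F → ∀ y, b (F y) (F x) = 0) ∧
    (∀ x, F x ∈ LinearMap.ker F → (∀ y, b y (F x) = 0) → x ∈ LinearMap.ker F) ∧
    (∀ lam : Module.Dual k M, (∀ y ∈ LinearMap.ker F, lam y = 0) →
      (∀ y, lam (F y) = 0) →
      ∃ x, F x ∈ LinearMap.ker F ∧ ∀ y, lam y = b y (F x)) :=
  stmt10_general p k σ M F V h1 h2 b halt hnd hpol
end

section
/- Let k be a perfect field of characteristic p, Q a finite-dimensional k-vector space, Φ : Q → Q a σ-semilinear map, R_1 = Ker(Φ), R_0 a complement of R_1, t : R_0 → R_1 a k-linear map, and Ψ : R_1 → Im(Φ)^⊥ ⊆ Q^∨ a σ-semilinear bijection. Then there exists a k-linear map u : Q → Q^∨ which is self-dual (i.e., u(x)(y) = u(y)(x) for all x,y ∈ Q) and satisfies u(Φ(r_0)) = −Ψ(t(r_0)) for all r_0 ∈ R_0. -/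
/-!
Restricted to the complement `R₀` of its kernel, `Φ` is a semilinear bijection onto `Im Φ`,
so `r₀ ↦ -Ψ (t r₀)` becomes a linear map `u₀ : Im Φ → Q^∨`, with values in `(Im Φ)^⊥`
by the hypothesis on the range of `Ψ`. Any such map extends to a symmetric `u : Q → Q^∨`:
with `A = u₀ ∘ π` for a projection `π` onto `Im Φ`, take `u = A + Aᵀ`,
whose second term vanishes on `Im Φ` because `A` takes values in `(Im Φ)^⊥`.
-/

attribute [local instance] RingHomInvPair.of_ringEquiv

open Module LinearMap

theorem Submodule.exists_symm_extension_of_range_le_dualAnnihilator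
    {K V : Type*} [Field K] [AddCommGroup V] [Module K V]
    (W : Submodule K V) (f : W →ₗ[K] Dual K V) (hf : range f ≤ W.dualAnnihilator) :
    ∃ u : V →ₗ[K] Dual K V, (∀ x y, u x y = u y x) ∧ ∀ w : W, u w = f w := by
  obtain ⟨C, hC⟩ := W.exists_isCompl
  set A := f ∘ₗ W.projectionOnto C hC
  refine ⟨A + A.flip, fun x y => add_comm _ _, fun w => ?_⟩
  ext y
  have hAy : f (W.projectionOnto C hC y) w = 0 :=
    (W.mem_dualAnnihilator _).mp (hf ⟨_, rfl⟩) w w.2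
  simp [A, hAy]

section

variable {R R₂ M M₂ : Type*} [Ring R] [Ring R₂] [AddCommGroup M] [AddCommGroup M₂]
  [Module R M] [Module R₂ M₂] {τ : R →+* R₂} {τ' : R₂ →+* R}
  [RingHomInvPair τ τ'] [RingHomInvPair τ' τ]

noncomputable def LinearMap.kerComplementEquivRangeₛₗ (f : M →ₛₗ[τ] M₂) {C : Submodule R M}
    (h : IsCompl C (ker f)) : C ≃ₛₗ[τ] range f :=
  .ofBijective (f.rangeRestrict ∘ₛₗ C.subtype)
    ⟨by simpa [← ker_eq_bot, ker_comp, ← Submodule.disjoint_iff_comap_eq_bot] using h.disjoint,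
     by
      rintro ⟨-, x, rfl⟩
      obtain ⟨y, z, hy, hz, rfl⟩ := Submodule.codisjoint_iff_exists_add_eq.mp h.codisjoint x
      exact ⟨⟨y, hy⟩, by simpa [Subtype.ext_iff] using hz⟩⟩

@[simp]
theorem LinearMap.coe_kerComplementEquivRangeₛₗ_apply (f : M →ₛₗ[τ] M₂) {C : Submodule R M}
    (h : IsCompl C (ker f)) (x : C) : (f.kerComplementEquivRangeₛₗ h x : M₂) = f x :=
  rfl

end

theorem LinearMap.exists_symm_apply_eq_of_isCompl_ker
    {K K' V V' : Type*} [Field K] [Ring K'] [AddCommGroup V] [Module K V]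
    [AddCommGroup V'] [Module K' V'] {τ : K' →+* K} {τ' : K →+* K'}
    [RingHomInvPair τ τ'] [RingHomInvPair τ' τ]
    (f : V' →ₛₗ[τ] V) {C : Submodule K' V'} (h : IsCompl C (ker f))
    (g : C →ₛₗ[τ] Dual K V) (hg : range g ≤ (range f).dualAnnihilator) :
    ∃ u : V →ₗ[K] Dual K V, (∀ x y, u x y = u y x) ∧ ∀ c : C, u (f c) = g c := by
  let e := f.kerComplementEquivRangeₛₗ h
  obtain ⟨u, hu_symm, hu_ext⟩ := (range f).exists_symm_extension_of_range_le_dualAnnihilator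
    (g ∘ₛₗ e.symm.toLinearMap) ((range_comp_le_range _ _).trans hg)
  exact ⟨u, hu_symm, fun c => by simpa [e] using hu_ext (e c)⟩

theorem stmt15_general (k : Type*) [Field k]
    (σ : k ≃+* k)
    (Q : Type*) [AddCommGroup Q] [Module k Q]
    (Φ : Q →ₛₗ[(σ : k →+* k)] Q)
    (R₀ : Submodule k Q) (hR₀ : IsCompl R₀ (LinearMap.ker Φ))
    (t : ↥R₀ →ₗ[k] ↥(LinearMap.ker Φ))
    (Ψ : ↥(LinearMap.ker Φ) →ₛₗ[(σ : k →+* k)] Module.Dual k Q)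
    (hΨrange : LinearMap.range Ψ = (LinearMap.range Φ).dualAnnihilator) :
    ∃ u : Q →ₗ[k] Module.Dual k Q,
      (∀ x y, u x y = u y x) ∧ ∀ r₀ : ↥R₀, u (Φ (r₀ : Q)) = -(Ψ (t r₀)) := by
  refine Φ.exists_symm_apply_eq_of_isCompl_ker hR₀ (-(Ψ ∘ₛₗ t)) ?_
  rw [← hΨrange]
  rintro _ ⟨r₀, rfl⟩
  exact neg_mem ⟨t r₀, rfl⟩

/-- Existence of the self-dual map `u` in the proof of independence of the complement:
given a complement `R₀` of `R₁ = ker Φ`, a linear map `t : R₀ → R₁`, and the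
`σ`-semilinear bijection `Ψ : R₁ → im(Φ)^⊥`, there is a self-dual `u : Q → Q^∨`
with `u(Φ(r₀)) = −Ψ(t(r₀))` for all `r₀ ∈ R₀`. -/
theorem stmt15 (p : ℕ) [Fact p.Prime] (k : Type*) [Field k] [CharP k p]
    (σ : k ≃+* k) (hσ : ∀ x : k, σ x = x ^ p)
    (Q : Type*) [AddCommGroup Q] [Module k Q] [FiniteDimensional k Q]
    (Φ : Q →ₛₗ[(σ : k →+* k)] Q)
    (R₀ : Submodule k Q) (hR₀ : IsCompl R₀ (LinearMap.ker Φ))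
    (t : ↥R₀ →ₗ[k] ↥(LinearMap.ker Φ))
    (Ψ : ↥(LinearMap.ker Φ) →ₛₗ[(σ : k →+* k)] Module.Dual k Q)
    (hΨinj : Function.Injective Ψ)
    (hΨrange : LinearMap.range Ψ = (LinearMap.range Φ).dualAnnihilator) :
    ∃ u : Q →ₗ[k] Module.Dual k Q,
      (∀ x y, u x y = u y x) ∧ ∀ r₀ : ↥R₀, u (Φ (r₀ : Q)) = -(Ψ (t r₀)) :=
  stmt15_general k σ Q Φ R₀ hR₀ t Ψ hΨrange
end
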